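/- Let $p\in(1,\infty)$, let $s$ satisfy $0<s<\frac{2}{p}$, let $\alpha\in\mathbb{R}$ and let $\omega>0$ be such that $\alpha+\frac{\gamma-\ln 2}{2\pi}+\frac{\ln\omega}{4\pi}>0$, where $\gamma$ is the Euler–Mascheroni constant. Then there exists a constant $C>0$ such that for every $\varphi\in L^p(\mathbb{R}^2)$ and every $x\in\mathbb{R}^2\setminus\{0\}$ one has $\int_0^\infty t^{-s/2}\,\frac{\left|\int_{\mathbb{R}^2}\varphi(y)\,G_{\omega+t}(y)\,dy\right|\;G_{\omega+t}(x)}{\alpha+\frac{\gamma-\ln 2}{2\pi}+\frac{\ln(\omega+t)}{4\pi}}\,dt \le C\,|x|^{\,s-\frac{2}{p}}\,\|\varphi\|_{L^p(\mathbb{R}^2)}$. (This pointwise bound is the key estimate in the proof of the two-dimensional Sobolev embedding for the perturbed Sobolev spaces.) -/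

import Mathlib

/-!
Write `G_μ = ∫₀^∞ e^{-μu} h_u du` with the heat kernel `h_u(y) = e^{-|y|²/4u}/(4πu)`
and argue with Tonelli on lower integrals. Hölder against `‖h_u‖_q = c u^{1/q - 1}`
(`1/p + 1/q = 1`) and a Gamma integral give `|∫ φ G_μ| ≤ C μ^{-1/q} ‖φ‖_p`.
The denominator is at least `α + c(ω) > 0`, and `t^{-s/2} (ω+t)^{-1/q} ≤ t^{a-1}` with
`a = 1/p - s/2 > 0`. Finally, since `G_{ω+t} ≤ G_t`,
`∫₀^∞ t^{a-1} G_{ω+t}(x) dt ≤ Γ(a) ∫₀^∞ u^{-a} h_u(x) du = Γ(a)² 4^a |x|^{-2a} / (4π)`,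
the last integral being a Gamma integral after `u ↦ 1/u`.
-/

open MeasureTheory Real Filter Set
open scoped ENNReal Topology

/-- The Green function of the Helmholtz operator `ω - Δ` on `ℝ²`, defined via the
subordination formula `G_ω(x) = ∫_0^∞ e^{-ωt} e^{-|x|²/(4t)}/(4πt) dt`
(equivalently `G_ω(x) = K_0(√ω |x|)/(2π)`). -/
noncomputable def greenFn2 (ω : ℝ) (x : EuclideanSpace ℝ (Fin 2)) : ℝ :=
  ∫ t in Set.Ioi (0:ℝ), Real.exp (-ω * t) * (Real.exp (-‖x‖^2 / (4*t)) / (4 * Real.pi * t))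

namespace MeasureTheory

variable {α : Type*} [MeasurableSpace α] {μ : Measure α} {f : α → ℝ}

theorem ofReal_integral_le_lintegral_ofReal (hf : 0 ≤ᵐ[μ] f) :
    ENNReal.ofReal (∫ a, f a ∂μ) ≤ ∫⁻ a, ENNReal.ofReal (f a) ∂μ := by
  by_cases hfi : Integrable f μ
  · exact (ofReal_integral_eq_lintegral_ofReal hfi hf).le
  · simp [integral_undef hfi]

theorem lintegral_ofReal_eq_of_integral_ne_zero (hf : 0 ≤ᵐ[μ] f) (h : ∫ a, f a ∂μ ≠ 0) :
    ∫⁻ a, ENNReal.ofReal (f a) ∂μ = ENNReal.ofReal (∫ a, f a ∂μ) :=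
  (ofReal_integral_eq_lintegral_ofReal (.of_integral_ne_zero h) hf).symm

end MeasureTheory

namespace Real

theorem lintegral_rpow_mul_exp_neg_mul_Ioi {a b : ℝ} (ha : 0 < a) (hb : 0 < b) :
    ∫⁻ u in Ioi (0 : ℝ), ENNReal.ofReal (u ^ (a - 1) * exp (-(b * u)))
      = ENNReal.ofReal ((1 / b) ^ a * Gamma a) := by
  have hI := integral_rpow_mul_exp_neg_mul_Ioi ha hb
  have hΓ := Gamma_pos_of_pos ha
  rw [← hI]
  refine lintegral_ofReal_eq_of_integral_ne_zero ?_ (by rw [hI]; positivity)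
  filter_upwards [ae_restrict_mem measurableSet_Ioi] with u (hu : 0 < u)
  positivity

theorem lintegral_exp_neg_div_mul_rpow_Ioi {a c : ℝ} (ha : 0 < a) (hc : 0 < c) :
    ∫⁻ u in Ioi (0 : ℝ), ENNReal.ofReal (exp (-(c / u)) * u ^ (-a - 1))
      = ENNReal.ofReal ((1 / c) ^ a * Gamma a) := by
  -- substitute `u ↦ u⁻¹` in the Gamma integral
  have hsubst := integral_comp_rpow_Ioi (fun u : ℝ => u ^ (a - 1) * exp (-(c * u)))
    (p := -1) (by norm_num)
  rw [integral_rpow_mul_exp_neg_mul_Ioi ha hc] at hsubst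
  have hintegrand : ∀ u ∈ Ioi (0 : ℝ), (|(-1 : ℝ)| * u ^ ((-1 : ℝ) - 1)) •
      ((u ^ (-1 : ℝ)) ^ (a - 1) * exp (-(c * u ^ (-1 : ℝ))))
        = exp (-(c / u)) * u ^ (-a - 1) := by
    intro u (hu : 0 < u)
    rw [smul_eq_mul, rpow_neg_one, inv_rpow hu.le, ← rpow_neg hu.le, div_eq_mul_inv]
    have : u ^ ((-1 : ℝ) - 1) * u ^ (-(a - 1)) = u ^ (-a - 1) := by
      rw [← rpow_add hu]; ring_nf
    rw [← this]; simp only [abs_neg, abs_one]; ring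
  rw [setIntegral_congr_fun measurableSet_Ioi hintegrand] at hsubst
  have hΓ := Gamma_pos_of_pos ha
  rw [← hsubst]
  refine lintegral_ofReal_eq_of_integral_ne_zero ?_ (by rw [hsubst]; positivity)
  filter_upwards [ae_restrict_mem measurableSet_Ioi] with u (hu : 0 < u)
  positivity

end Real

local notation "E²" => EuclideanSpace ℝ (Fin 2)

noncomputable def heatKernel (u : ℝ) (y : E²) : ℝ := exp (-‖y‖ ^ 2 / (4 * u)) / (4 * π * u)

theorem heatKernel_nonneg {u : ℝ} (hu : 0 ≤ u) (y : E²) : 0 ≤ heatKernel u y := by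
  unfold heatKernel; positivity

theorem greenFn2_nonneg (μ : ℝ) (x : E²) : 0 ≤ greenFn2 μ x :=
  setIntegral_nonneg measurableSet_Ioi fun u (hu : 0 < u) =>
    mul_nonneg (exp_nonneg _) (heatKernel_nonneg hu.le x)

theorem ofReal_greenFn2_le {ν μ : ℝ} (hνμ : ν ≤ μ) (x : E²) :
    ENNReal.ofReal (greenFn2 μ x)
      ≤ ∫⁻ u in Ioi (0 : ℝ), ENNReal.ofReal (exp (-(ν * u)) * heatKernel u x) := by
  have hnonneg : ∀ᵐ u ∂(volume.restrict (Ioi (0 : ℝ))), 0 ≤ exp (-μ * u) * heatKernel u x := by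
    filter_upwards [ae_restrict_mem measurableSet_Ioi] with u (hu : 0 < u)
    exact mul_nonneg (exp_nonneg _) (heatKernel_nonneg hu.le x)
  refine (ofReal_integral_le_lintegral_ofReal hnonneg).trans
    (setLIntegral_mono' measurableSet_Ioi fun u (hu : 0 < u) => ?_)
  gcongr
  · exact heatKernel_nonneg hu.le x
  · nlinarith

theorem lintegral_ofReal_heatKernel_rpow {u q : ℝ} (hu : 0 < u) (hq : 0 < q) :
    ∫⁻ y : E², ENNReal.ofReal (heatKernel u y) ^ q
      = ENNReal.ofReal ((4 * π * u) ^ (1 - q) / q) := by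
  have h4πu : 0 < 4 * π * u := by positivity
  have hgauss : ∀ y : E², ENNReal.ofReal (heatKernel u y) ^ q
      = ENNReal.ofReal (exp (-(q / (4 * u)) * ‖y‖ ^ 2) * (4 * π * u) ^ (-q)) := by
    intro y
    rw [ENNReal.ofReal_rpow_of_nonneg (heatKernel_nonneg hu.le y) hq.le, heatKernel,
      div_rpow (exp_nonneg _) h4πu.le, ← exp_mul, rpow_neg h4πu.le, div_eq_mul_inv]
    congr 3
    ring
  have hI : ∫ y : E², exp (-(q / (4 * u)) * ‖y‖ ^ 2) * (4 * π * u) ^ (-q)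
      = (4 * π * u) ^ (1 - q) / q := by
    rw [integral_mul_const, GaussianFourier.integral_rexp_neg_mul_sq_norm (by positivity),
      finrank_euclideanSpace_fin, sub_eq_add_neg, rpow_add h4πu]
    norm_num
    field_simp
  simp_rw [hgauss]
  rw [lintegral_ofReal_eq_of_integral_ne_zero (.of_forall fun y => by positivity)
    (by rw [hI]; positivity), hI]

theorem lintegral_enorm_mul_heatKernel_le {p q : ℝ} (hpq : p.HolderConjugate q) {φ : E² → ℝ}
    (hφ : AEMeasurable φ) {u : ℝ} (hu : 0 < u) :
    ∫⁻ y, ‖φ y‖ₑ * ENNReal.ofReal (heatKernel u y)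
      ≤ eLpNorm φ (ENNReal.ofReal p) volume
          * ENNReal.ofReal (((4 * π) ^ (1 - q) / q) ^ (1 / q) * u ^ (1 / q - 1)) := by
  have hq := hpq.symm.pos
  have hkernel : Measurable fun y => ENNReal.ofReal (heatKernel u y) := by
    unfold heatKernel; fun_prop
  refine (ENNReal.lintegral_mul_le_Lp_mul_Lq volume hpq hφ.enorm
    hkernel.aemeasurable).trans_eq ?_
  rw [eLpNorm_eq_lintegral_rpow_enorm_toReal (by simpa using hpq.pos) ENNReal.ofReal_ne_top,
    ENNReal.toReal_ofReal hpq.nonneg, lintegral_ofReal_heatKernel_rpow hu hq,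
    ENNReal.ofReal_rpow_of_nonneg (by positivity) (by positivity)]
  congr 2
  rw [mul_rpow (by positivity) hu.le, mul_div_right_comm,
    mul_rpow (by positivity) (by positivity), ← rpow_mul hu.le]
  congr 2
  field_simp

theorem lintegral_mul_ofReal_greenFn2_le {f : E² → ℝ≥0∞} (hf : AEMeasurable f) (μ : ℝ) :
    ∫⁻ y, f y * ENNReal.ofReal (greenFn2 μ y)
      ≤ ∫⁻ u in Ioi (0 : ℝ), ENNReal.ofReal (exp (-(μ * u)))
          * ∫⁻ y, f y * ENNReal.ofReal (heatKernel u y) := by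
  have hkernel : Measurable fun z : E² × ℝ =>
      ENNReal.ofReal (exp (-(μ * z.2)) * heatKernel z.2 z.1) := by
    unfold heatKernel; fun_prop
  calc ∫⁻ y, f y * ENNReal.ofReal (greenFn2 μ y)
      ≤ ∫⁻ y, ∫⁻ u in Ioi (0 : ℝ), f y * ENNReal.ofReal (exp (-(μ * u)) * heatKernel u y) := by
        gcongr with y
        have hmeas : Measurable fun u => ENNReal.ofReal (exp (-(μ * u)) * heatKernel u y) :=
          hkernel.comp measurable_prodMk_left
        rw [lintegral_const_mul (f y) hmeas]
        gcongr
        exact ofReal_greenFn2_le le_rfl y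
    _ = ∫⁻ u in Ioi (0 : ℝ), ∫⁻ y, f y * ENNReal.ofReal (exp (-(μ * u)) * heatKernel u y) :=
        lintegral_lintegral_swap ((hf.comp_fst).mul hkernel.aemeasurable)
    _ = _ := by
        refine setLIntegral_congr_fun measurableSet_Ioi fun u (hu : 0 < u) => ?_
        simp_rw [ENNReal.ofReal_mul (exp_nonneg _), mul_left_comm (f _)]
        exact lintegral_const_mul' _ _ ENNReal.ofReal_ne_top

theorem exists_enorm_integral_mul_greenFn2_le {p q : ℝ} (hpq : p.HolderConjugate q) :
    ∃ c > 0, ∀ φ : E² → ℝ, AEMeasurable φ → ∀ μ > 0,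
      ‖∫ y, φ y * greenFn2 μ y‖ₑ
        ≤ eLpNorm φ (ENNReal.ofReal p) volume * ENNReal.ofReal (c * μ ^ (-(1 / q))) := by
  have hq := hpq.symm.pos
  set cH := ((4 * π) ^ (1 - q) / q) ^ (1 / q)
  have hcH : 0 < cH := by positivity
  have hΓ := Gamma_pos_of_pos (one_div_pos.mpr hq)
  refine ⟨cH * Gamma (1 / q), by positivity, fun φ hφ μ hμ => ?_⟩
  set N := eLpNorm φ (ENNReal.ofReal p) volume
  calc ‖∫ y, φ y * greenFn2 μ y‖ₑ
      ≤ ∫⁻ y, ‖φ y‖ₑ * ENNReal.ofReal (greenFn2 μ y) := by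
        refine (enorm_integral_le_lintegral_enorm _).trans_eq ?_
        simp_rw [enorm_mul, Real.enorm_of_nonneg (greenFn2_nonneg μ _)]
    _ ≤ ∫⁻ u in Ioi (0 : ℝ), ENNReal.ofReal (exp (-(μ * u)))
          * ∫⁻ y, ‖φ y‖ₑ * ENNReal.ofReal (heatKernel u y) :=
        lintegral_mul_ofReal_greenFn2_le hφ.enorm μ
    _ ≤ ∫⁻ u in Ioi (0 : ℝ), N * ENNReal.ofReal cH
          * ENNReal.ofReal (u ^ (1 / q - 1) * exp (-(μ * u))) := by
        refine setLIntegral_mono' measurableSet_Ioi fun u (hu : 0 < u) => ?_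
        grw [lintegral_enorm_mul_heatKernel_le hpq hφ hu]
        rw [ENNReal.ofReal_mul hcH.le, ENNReal.ofReal_mul (by positivity)]
        exact le_of_eq (by ring)
    _ = N * ENNReal.ofReal (cH * Gamma (1 / q) * μ ^ (-(1 / q))) := by
        rw [lintegral_const_mul _ (by fun_prop), lintegral_rpow_mul_exp_neg_mul_Ioi
          (one_div_pos.mpr hq) hμ, mul_assoc, ← ENNReal.ofReal_mul hcH.le, one_div μ,
          inv_rpow hμ.le, ← rpow_neg hμ.le]
        ring_nf

theorem lintegral_heatKernel_mul_rpow_neg {a : ℝ} (ha : 0 < a) {x : E²} (hx : x ≠ 0) :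
    ∫⁻ u in Ioi (0 : ℝ), ENNReal.ofReal (heatKernel u x * u ^ (-a))
      = ENNReal.ofReal (Gamma a * 4 ^ a / (4 * π) * ‖x‖ ^ (-2 * a)) := by
  have hr : 0 < ‖x‖ := norm_pos_iff.mpr hx
  have hintegrand : ∀ u ∈ Ioi (0 : ℝ), ENNReal.ofReal (heatKernel u x * u ^ (-a))
      = ENNReal.ofReal (1 / (4 * π))
          * ENNReal.ofReal (exp (-(‖x‖ ^ 2 / 4 / u)) * u ^ (-a - 1)) := by
    intro u (hu : 0 < u)
    rw [← ENNReal.ofReal_mul (by positivity), heatKernel, sub_eq_add_neg, rpow_add hu,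
      rpow_neg_one]
    congr 1
    field_simp
  rw [setLIntegral_congr_fun measurableSet_Ioi hintegrand,
    lintegral_const_mul' _ _ ENNReal.ofReal_ne_top,
    lintegral_exp_neg_div_mul_rpow_Ioi ha (by positivity), ← ENNReal.ofReal_mul (by positivity)]
  congr 1
  rw [one_div_div, div_rpow (by norm_num) (by positivity), ← rpow_natCast, ← rpow_mul hr.le,
    neg_mul, rpow_neg hr.le]
  push_cast
  ring

theorem lintegral_rpow_mul_greenFn2_le {a ω : ℝ} (ha : 0 < a) (hω : 0 ≤ ω) {x : E²}
    (hx : x ≠ 0) :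
    ∫⁻ t in Ioi (0 : ℝ), ENNReal.ofReal (t ^ (a - 1) * greenFn2 (ω + t) x)
      ≤ ENNReal.ofReal (Gamma a ^ 2 * 4 ^ a / (4 * π) * ‖x‖ ^ (-2 * a)) := by
  have hΓ := Gamma_pos_of_pos ha
  have hkernel : Measurable (Function.uncurry fun t u : ℝ =>
      ENNReal.ofReal (t ^ (a - 1) * exp (-(t * u)) * heatKernel u x)) := by
    unfold heatKernel Function.uncurry; fun_prop
  calc ∫⁻ t in Ioi (0 : ℝ), ENNReal.ofReal (t ^ (a - 1) * greenFn2 (ω + t) x)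
      ≤ ∫⁻ t in Ioi (0 : ℝ), ∫⁻ u in Ioi (0 : ℝ),
          ENNReal.ofReal (t ^ (a - 1) * exp (-(t * u)) * heatKernel u x) := by
        refine setLIntegral_mono' measurableSet_Ioi fun t (ht : 0 < t) => ?_
        have htp : 0 ≤ t ^ (a - 1) := by positivity
        rw [ENNReal.ofReal_mul htp]
        grw [ofReal_greenFn2_le (by linarith : t ≤ ω + t) x,
          ← lintegral_const_mul' _ _ ENNReal.ofReal_ne_top]
        simp only [← ENNReal.ofReal_mul htp, mul_assoc, le_refl]
    _ = ∫⁻ u in Ioi (0 : ℝ), ∫⁻ t in Ioi (0 : ℝ),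
          ENNReal.ofReal (t ^ (a - 1) * exp (-(t * u)) * heatKernel u x) :=
        lintegral_lintegral_swap hkernel.aemeasurable
    _ = ∫⁻ u in Ioi (0 : ℝ),
          ENNReal.ofReal (Gamma a) * ENNReal.ofReal (heatKernel u x * u ^ (-a)) := by
        refine setLIntegral_congr_fun measurableSet_Ioi fun u (hu : 0 < u) => ?_
        have hk := heatKernel_nonneg hu.le x
        simp_rw [ENNReal.ofReal_mul' hk, mul_comm _ u]
        rw [lintegral_mul_const' _ _ ENNReal.ofReal_ne_top,
          lintegral_rpow_mul_exp_neg_mul_Ioi ha hu, ← ENNReal.ofReal_mul hΓ.le,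
          ← ENNReal.ofReal_mul (by positivity), one_div, inv_rpow hu.le, ← rpow_neg hu.le]
        ring_nf
    _ = _ := by
        rw [lintegral_const_mul' _ _ ENNReal.ofReal_ne_top,
          lintegral_heatKernel_mul_rpow_neg ha hx, ← ENNReal.ofReal_mul hΓ.le]
        ring_nf

theorem ofReal_rpow_mul_abs_mul_div_le {p q s ω t c d D I G : ℝ} {N : ℝ≥0∞}
    (hpq : p.HolderConjugate q) (hω : 0 ≤ ω) (ht : 0 < t) (hc : 0 ≤ c) (hd : 0 < d)
    (hdD : d ≤ D) (hG : 0 ≤ G) (hI : ‖I‖ₑ ≤ N * ENNReal.ofReal (c * (ω + t) ^ (-(1 / q)))) :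
    ENNReal.ofReal (t ^ (-s / 2) * |I| * G / D)
      ≤ ENNReal.ofReal (c / d) * N * ENNReal.ofReal (t ^ (1 / p - s / 2 - 1) * G) := by
  have hpow : t ^ (-s / 2) * (ω + t) ^ (-(1 / q)) ≤ t ^ (1 / p - s / 2 - 1) := by
    have hexp : 1 / p - s / 2 - 1 = -s / 2 + -(1 / q) := by
      have := hpq.inv_add_inv_eq_one; simp only [one_div]; linarith
    rw [hexp, rpow_add ht]
    exact mul_le_mul_of_nonneg_left
      (rpow_le_rpow_of_nonpos ht (by linarith) (neg_nonpos.mpr hpq.symm.one_div_nonneg))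
      (by positivity)
  calc ENNReal.ofReal (t ^ (-s / 2) * |I| * G / D)
      ≤ ENNReal.ofReal (d⁻¹ * t ^ (-s / 2) * G) * ‖I‖ₑ := by
        rw [Real.enorm_eq_ofReal_abs, ← ENNReal.ofReal_mul (by positivity)]
        gcongr
        calc t ^ (-s / 2) * |I| * G / D ≤ t ^ (-s / 2) * |I| * G / d := by gcongr
          _ = _ := by ring
    _ ≤ ENNReal.ofReal (d⁻¹ * t ^ (-s / 2) * G)
          * (N * ENNReal.ofReal (c * (ω + t) ^ (-(1 / q)))) := by
        gcongr
    _ = ENNReal.ofReal (c / d) * N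
          * ENNReal.ofReal (t ^ (-s / 2) * (ω + t) ^ (-(1 / q)) * G) := by
        rw [mul_left_comm, ← ENNReal.ofReal_mul (by positivity), ← mul_assoc,
          mul_right_comm _ N, ← ENNReal.ofReal_mul (by positivity)]
        ring_nf
    _ ≤ _ := by gcongr

theorem pointwise_sobolev_key_estimate_2d_general (p s α ω : ℝ)
    (hp : 1 < p) (hs₂ : s < 2/p) (hω : 0 < ω)
    (hα : 0 < α + (Real.eulerMascheroniConstant - Real.log 2) / (2 * Real.pi)
              + Real.log ω / (4 * Real.pi)) :
    ∃ C : ℝ, 0 < C ∧ ∀ φ : EuclideanSpace ℝ (Fin 2) → ℝ,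
      MemLp φ (ENNReal.ofReal p) volume →
      ∀ x : EuclideanSpace ℝ (Fin 2), x ≠ 0 →
      (∫⁻ t in Set.Ioi (0:ℝ),
          ENNReal.ofReal (t ^ (-s/2)
            * |∫ y : EuclideanSpace ℝ (Fin 2), φ y * greenFn2 (ω + t) y|
            * greenFn2 (ω + t) x
            / (α + (Real.eulerMascheroniConstant - Real.log 2) / (2 * Real.pi)
                 + Real.log (ω + t) / (4 * Real.pi))))
        ≤ ENNReal.ofReal (C * ‖x‖ ^ (s - 2/p)
            * (eLpNorm φ (ENNReal.ofReal p) volume).toReal) := by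
  have hpq := Real.HolderConjugate.conjExponent hp
  set d := α + (eulerMascheroniConstant - log 2) / (2 * π) + log ω / (4 * π) with hd
  have ha : 0 < 1 / p - s / 2 := by linarith [show 2 / p = 2 * (1 / p) by ring]
  have hΓ := Gamma_pos_of_pos ha
  obtain ⟨c, hc, hpairing⟩ := exists_enorm_integral_mul_greenFn2_le hpq
  refine ⟨c / d * (Gamma (1 / p - s / 2) ^ 2 * 4 ^ (1 / p - s / 2) / (4 * π)),
    by positivity, fun φ hφ x hx => ?_⟩
  have hN := hφ.eLpNorm_ne_top
  calc _ ≤ ∫⁻ t in Ioi (0 : ℝ), ENNReal.ofReal (c / d) * eLpNorm φ (ENNReal.ofReal p) volume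
          * ENNReal.ofReal (t ^ (1 / p - s / 2 - 1) * greenFn2 (ω + t) x) := by
        refine setLIntegral_mono' measurableSet_Ioi fun t (ht : 0 < t) => ?_
        refine ofReal_rpow_mul_abs_mul_div_le hpq hω.le ht hc.le hα ?_ (greenFn2_nonneg _ x)
          (hpairing φ hφ.aemeasurable _ (by positivity))
        rw [hd]
        gcongr
        linarith
    _ ≤ ENNReal.ofReal (c / d) * eLpNorm φ (ENNReal.ofReal p) volume
          * ENNReal.ofReal (Gamma (1 / p - s / 2) ^ 2 * 4 ^ (1 / p - s / 2) / (4 * π)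
            * ‖x‖ ^ (-2 * (1 / p - s / 2))) := by
        rw [lintegral_const_mul' _ _ (by finiteness)]
        gcongr
        exact lintegral_rpow_mul_greenFn2_le ha hω.le hx
    _ = _ := by
        conv_lhs => rw [← ENNReal.ofReal_toReal hN]
        rw [← ENNReal.ofReal_mul (by positivity), ← ENNReal.ofReal_mul (by positivity)]
        ring_nf

/-- Let `p ∈ (1,∞)`, `0 < s < 2/p`, `α ∈ ℝ`, `ω > 0` with
`α + (γ - ln 2)/(2π) + (ln ω)/(4π) > 0` (`γ` the Euler–Mascheroni constant). Then there is
`C > 0` such that for every `φ ∈ L^p(ℝ²)` and every `x ≠ 0`,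
`∫_0^∞ t^{-s/2} |∫ φ G_{ω+t}| G_{ω+t}(x) / (α + c(ω+t)) dt ≤ C |x|^{s-2/p} ‖φ‖_{L^p}`. -/
theorem pointwise_sobolev_key_estimate_2d (p s α ω : ℝ)
    (hp : 1 < p) (hs₁ : 0 < s) (hs₂ : s < 2/p) (hω : 0 < ω)
    (hα : 0 < α + (Real.eulerMascheroniConstant - Real.log 2) / (2 * Real.pi)
              + Real.log ω / (4 * Real.pi)) :
    ∃ C : ℝ, 0 < C ∧ ∀ φ : EuclideanSpace ℝ (Fin 2) → ℝ,
      MemLp φ (ENNReal.ofReal p) volume →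
      ∀ x : EuclideanSpace ℝ (Fin 2), x ≠ 0 →
      (∫⁻ t in Set.Ioi (0:ℝ),
          ENNReal.ofReal (t ^ (-s/2)
            * |∫ y : EuclideanSpace ℝ (Fin 2), φ y * greenFn2 (ω + t) y|
            * greenFn2 (ω + t) x
            / (α + (Real.eulerMascheroniConstant - Real.log 2) / (2 * Real.pi)
                 + Real.log (ω + t) / (4 * Real.pi))))
        ≤ ENNReal.ofReal (C * ‖x‖ ^ (s - 2/p)
            * (eLpNorm φ (ENNReal.ofReal p) volume).toReal) :=
  pointwise_sobolev_key_estimate_2d_general p s α ω hp hs₂ hω hα
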